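/- For all x, y > 0: (i) if 0 ≤ α < β ≤ 1 then H_β(x,y) ≤ H_α(x,y); (ii) if 0 ≤ α < β ≤ 2 then G_β(x,y) ≤ G_α(x,y); (iii) if 0 ≤ α < β ≤ 1 then A_α(x,y) ≤ A_β(x,y). -/

import Mathlib

open scoped ComplexOrder

/-- Logarithmic mean. -/
noncomputable def LM (x y : ℝ) : ℝ :=
  if x = y then x else (x - y) / (Real.log x - Real.log y)

/-- The mean `A_α`, with `A_0 = LM`. -/
noncomputable def Amean (α x y : ℝ) : ℝ :=
  if x = y then x else if α = 0 then LM x y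
  else α * (x ^ α + y ^ α) * (x - y) / (2 * (x ^ α - y ^ α))

/-- The mean `G_α`, with `G_0 = LM`. -/
noncomputable def Gmean (α x y : ℝ) : ℝ :=
  if x = y then x else if α = 0 then LM x y
  else α * (x * y) ^ (α / 2) * (x - y) / (x ^ α - y ^ α)

/-- The mean `H_α`, with `H_0 = LM`. -/
noncomputable def Hmean (α x y : ℝ) : ℝ :=
  if x = y then x else if α = 0 then LM x y
  else 2 * α * (x * y) ^ α * (x - y) / ((x ^ α + y ^ α) * (x ^ α - y ^ α))

/-- The power difference mean `M_α`. -/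
noncomputable def Mmean (α x y : ℝ) : ℝ :=
  if x = y then x
  else ((α - 1) / α) * (x ^ α - y ^ α) / (x ^ (α - 1) - y ^ (α - 1))

/-- A continuous real function `φ` is positive definite if every matrix
`[φ(tᵢ - tⱼ)]` is positive semidefinite (as a complex matrix). -/
def IsPosDefFun (φ : ℝ → ℝ) : Prop :=
  Continuous φ ∧ ∀ (n : ℕ) (t : Fin n → ℝ),
    Matrix.PosSemidef (Matrix.of fun i j : Fin n => (φ (t i - t j) : ℂ))

/-!
Put `t = (log x - log y) / 2` and `sinhc s = sinh s / s` (with `sinhc 0 = 1`). The identities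
`x ^ α ∓ y ^ α = 2 (x y) ^ (α / 2) (sinh, cosh) (α t)` turn the means into
`G_α = LM / sinhc (α t)`, `A_α = LM · cosh (α t) / sinhc (α t)` and `H_α = G_{2α}`,
the value `sinhc 0 = 1` accounting for `A_0 = G_0 = LM`. Both `sinhc` and
`cosh / sinhc = s coth s` are even and increasing on `[0, ∞)`, which gives all three claims.
-/

open Real Set

lemma sinh_le_mul_cosh {s : ℝ} (hs : 0 ≤ s) : sinh s ≤ s * cosh s := by
  have hmono : MonotoneOn (fun s : ℝ => s * cosh s - sinh s) (Ici 0) := by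
    refine monotoneOn_of_deriv_nonneg (convex_Ici 0) (by fun_prop) (by fun_prop) fun u hu => ?_
    rw [interior_Ici, mem_Ioi] at hu
    have hd : HasDerivAt (fun s : ℝ => s * cosh s - sinh s) (u * sinh u) u :=
      (((hasDerivAt_id' u).mul (hasDerivAt_cosh u)).sub (hasDerivAt_sinh u)).congr_deriv (by ring)
    rw [hd.deriv]
    exact mul_nonneg hu.le (sinh_nonneg_iff.mpr hu.le)
  simpa using hmono self_mem_Ici hs hs

lemma monotoneOn_Ici_of_monotoneOn_Ioi {f : ℝ → ℝ} {a : ℝ} (hf : MonotoneOn f (Ioi a))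
    (ha : ∀ b ∈ Ioi a, f a ≤ f b) : MonotoneOn f (Ici a) := by
  rw [← Ioi_insert]
  exact monotoneOn_insert_iff.2
    ⟨fun b hb hba => absurd hba (not_le.mpr hb), fun b hb _ => ha b hb, hf⟩

lemma monotoneOn_Ioi_of_hasDerivAt_nonneg {f f' : ℝ → ℝ} {a : ℝ}
    (hf : ∀ x ∈ Ioi a, HasDerivAt f (f' x) x) (hf' : ∀ x ∈ Ioi a, 0 ≤ f' x) :
    MonotoneOn f (Ioi a) :=
  monotoneOn_of_hasDerivWithinAt_nonneg (convex_Ioi a)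
    (fun x hx => (hf x hx).continuousAt.continuousWithinAt)
    (by simpa using fun x hx => (hf x hx).hasDerivWithinAt) (by simpa using hf')

noncomputable def sinhc (s : ℝ) : ℝ := if s = 0 then 1 else sinh s / s

@[simp]
lemma sinhc_zero : sinhc 0 = 1 := if_pos rfl

lemma sinhc_of_ne_zero {s : ℝ} (hs : s ≠ 0) : sinhc s = sinh s / s := if_neg hs

@[simp]
lemma sinhc_neg (s : ℝ) : sinhc (-s) = sinhc s := by
  rcases eq_or_ne s 0 with rfl | hs
  · simp
  · rw [sinhc_of_ne_zero hs, sinhc_of_ne_zero (neg_ne_zero.mpr hs), sinh_neg, neg_div_neg_eq]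

lemma sinhc_abs (s : ℝ) : sinhc |s| = sinhc s := by
  rcases abs_choice s with h | h <;> simp [h]

lemma sinhc_pos (s : ℝ) : 0 < sinhc s := by
  rw [← sinhc_abs]
  rcases (abs_nonneg s).eq_or_lt with h | h
  · simp [← h]
  · rw [sinhc_of_ne_zero h.ne']
    exact div_pos (sinh_pos_iff.mpr h) h

lemma monotoneOn_sinhc : MonotoneOn sinhc (Ici 0) := by
  refine monotoneOn_Ici_of_monotoneOn_Ioi (MonotoneOn.congr (f₁ := fun s => sinh s / s) ?_
    fun s hs => (sinhc_of_ne_zero (ne_of_gt hs)).symm) fun b hb => ?_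
  · refine monotoneOn_Ioi_of_hasDerivAt_nonneg
      (fun u hu => (hasDerivAt_sinh u).div (hasDerivAt_id' u) (ne_of_gt hu)) fun u hu => ?_
    have := sinh_le_mul_cosh (le_of_lt hu)
    exact div_nonneg (by linarith) (sq_nonneg u)
  · rw [sinhc_zero, sinhc_of_ne_zero (ne_of_gt hb), le_div_iff₀ hb, one_mul]
    exact self_le_sinh_iff.mpr (le_of_lt hb)

lemma monotoneOn_cosh_div_sinhc : MonotoneOn (fun s => cosh s / sinhc s) (Ici 0) := by
  have hEq : EqOn (fun s => s * cosh s / sinh s) (fun s => cosh s / sinhc s) (Ioi 0) :=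
    fun s hs => by simp only [sinhc_of_ne_zero (ne_of_gt hs), div_div_eq_mul_div, mul_comm]
  refine monotoneOn_Ici_of_monotoneOn_Ioi (MonotoneOn.congr ?_ hEq) fun b hb => ?_
  · refine monotoneOn_Ioi_of_hasDerivAt_nonneg (fun u hu => ((hasDerivAt_id' u).mul
      (hasDerivAt_cosh u)).div (hasDerivAt_sinh u) (sinh_pos_iff.mpr hu).ne') fun u hu => ?_
    -- the numerator is `sinh u * cosh u - u`, nonnegative as `2 * u ≤ sinh (2 * u)`
    have h2u := self_le_sinh_iff.mpr (mul_nonneg zero_le_two (le_of_lt hu))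
    rw [sinh_two_mul] at h2u
    refine div_nonneg ?_ (sq_nonneg _)
    simp only [Pi.mul_apply]
    linear_combination (2 : ℝ)⁻¹ * h2u + u * cosh_sq_sub_sinh_sq u
  · rw [sinhc_zero, cosh_zero, div_one, sinhc_of_ne_zero (ne_of_gt hb), div_div_eq_mul_div,
      le_div_iff₀ (sinh_pos_iff.mpr hb), one_mul, mul_comm]
    exact sinh_le_mul_cosh (le_of_lt hb)

lemma sinhc_le_sinhc_of_abs_le {a b : ℝ} (h : |a| ≤ |b|) : sinhc a ≤ sinhc b := by
  rw [← sinhc_abs a, ← sinhc_abs b]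
  exact monotoneOn_sinhc (abs_nonneg a) ((abs_nonneg a).trans h) h

lemma cosh_div_sinhc_le_of_abs_le {a b : ℝ} (h : |a| ≤ |b|) :
    cosh a / sinhc a ≤ cosh b / sinhc b := by
  rw [← sinhc_abs a, ← sinhc_abs b, ← cosh_abs a, ← cosh_abs b]
  exact monotoneOn_cosh_div_sinhc (abs_nonneg a) ((abs_nonneg a).trans h) h

lemma two_mul_exp_mul_sinh (p q : ℝ) : 2 * exp p * sinh q = exp (p + q) - exp (p - q) := by
  rw [sinh_eq, exp_add, exp_sub, exp_neg]
  ring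

lemma two_mul_exp_mul_cosh (p q : ℝ) : 2 * exp p * cosh q = exp (p + q) + exp (p - q) := by
  rw [cosh_eq, exp_add, exp_sub, exp_neg]
  ring

lemma rpow_sub_rpow_eq_mul_sinh {x y : ℝ} (hx : 0 < x) (hy : 0 < y) (α : ℝ) :
    x ^ α - y ^ α = 2 * (x * y) ^ (α / 2) * sinh (α * ((log x - log y) / 2)) := by
  rw [rpow_def_of_pos hx, rpow_def_of_pos hy, rpow_def_of_pos (mul_pos hx hy),
    log_mul hx.ne' hy.ne', two_mul_exp_mul_sinh]
  congr 2 <;> ring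

lemma rpow_add_rpow_eq_mul_cosh {x y : ℝ} (hx : 0 < x) (hy : 0 < y) (α : ℝ) :
    x ^ α + y ^ α = 2 * (x * y) ^ (α / 2) * cosh (α * ((log x - log y) / 2)) := by
  rw [rpow_def_of_pos hx, rpow_def_of_pos hy, rpow_def_of_pos (mul_pos hx hy),
    log_mul hx.ne' hy.ne', two_mul_exp_mul_cosh]
  congr 2 <;> ring

lemma LM_nonneg {x y : ℝ} (hx : 0 < x) (hy : 0 < y) : 0 ≤ LM x y := by
  unfold LM
  split_ifs with h
  · exact hx.le
  rcases lt_or_gt_of_ne h with h | h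
  · exact (div_pos_of_neg_of_neg (by linarith) (by linarith [log_lt_log hx h])).le
  · exact (div_pos (by linarith) (by linarith [log_lt_log hy h])).le

lemma Gmean_eq_LM_div_sinhc {x y : ℝ} (hx : 0 < x) (hy : 0 < y) (α : ℝ) :
    Gmean α x y = LM x y / sinhc (α * ((log x - log y) / 2)) := by
  unfold Gmean
  split_ifs with hxy hα
  · simp [hxy, LM]
  · simp [hα]
  have hlog : log x - log y ≠ 0 := sub_ne_zero.mpr fun h => hxy (log_injOn_pos hx hy h)
  have ht : α * ((log x - log y) / 2) ≠ 0 := by positivity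
  rw [rpow_sub_rpow_eq_mul_sinh hx hy, LM, if_neg hxy, sinhc_of_ne_zero ht]
  have := sinh_ne_zero.mpr ht
  have := (rpow_pos_of_pos (mul_pos hx hy) (α / 2)).ne'
  field_simp

lemma Amean_eq_LM_mul_cosh_div_sinhc {x y : ℝ} (hx : 0 < x) (hy : 0 < y) (α : ℝ) :
    Amean α x y =
      LM x y * (cosh (α * ((log x - log y) / 2)) / sinhc (α * ((log x - log y) / 2))) := by
  unfold Amean
  split_ifs with hxy hα
  · simp [hxy, LM]
  · simp [hα]
  have hlog : log x - log y ≠ 0 := sub_ne_zero.mpr fun h => hxy (log_injOn_pos hx hy h)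
  have ht : α * ((log x - log y) / 2) ≠ 0 := by positivity
  rw [rpow_sub_rpow_eq_mul_sinh hx hy, rpow_add_rpow_eq_mul_cosh hx hy, LM, if_neg hxy,
    sinhc_of_ne_zero ht]
  have := sinh_ne_zero.mpr ht
  have := (rpow_pos_of_pos (mul_pos hx hy) (α / 2)).ne'
  field_simp

lemma Hmean_eq_Gmean_two_mul {x y : ℝ} (hx : 0 < x) (hy : 0 < y) (α : ℝ) :
    Hmean α x y = Gmean (2 * α) x y := by
  unfold Hmean Gmean
  by_cases hxy : x = y
  · simp [hxy]
  by_cases hα : α = 0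
  · simp [hα]
  have rpow_two_mul : ∀ z : ℝ, 0 < z → z ^ (2 * α) = (z ^ α) ^ 2 := fun z hz => by
    rw [mul_comm, rpow_mul hz.le, rpow_two]
  rw [if_neg hxy, if_neg hxy, if_neg hα, if_neg (mul_ne_zero two_ne_zero hα),
    mul_div_cancel_left₀ α two_ne_zero, rpow_two_mul x hx, rpow_two_mul y hy, sq_sub_sq]

lemma abs_mul_le_abs_mul_of_le {a b : ℝ} (ha : 0 ≤ a) (hab : a ≤ b) (t : ℝ) :
    |a * t| ≤ |b * t| := by
  rw [abs_mul, abs_mul, abs_of_nonneg ha, abs_of_nonneg (ha.trans hab)]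
  exact mul_le_mul_of_nonneg_right hab (abs_nonneg t)

theorem Gmean_antitoneOn {x y : ℝ} (hx : 0 < x) (hy : 0 < y) :
    AntitoneOn (fun α => Gmean α x y) (Ici 0) := by
  intro a ha b _ hab
  simp only [Gmean_eq_LM_div_sinhc hx hy]
  exact div_le_div_of_nonneg_left (LM_nonneg hx hy) (sinhc_pos _)
    (sinhc_le_sinhc_of_abs_le (abs_mul_le_abs_mul_of_le ha hab _))

theorem Amean_monotoneOn {x y : ℝ} (hx : 0 < x) (hy : 0 < y) :
    MonotoneOn (fun α => Amean α x y) (Ici 0) := by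
  intro a ha b _ hab
  simp only [Amean_eq_LM_mul_cosh_div_sinhc hx hy]
  exact mul_le_mul_of_nonneg_left
    (cosh_div_sinhc_le_of_abs_le (abs_mul_le_abs_mul_of_le ha hab _)) (LM_nonneg hx hy)

/-- Monotonicity in the parameter of the means `H`, `G` and `A`. -/
theorem statement3 (x y : ℝ) (hx : 0 < x) (hy : 0 < y) :
    (∀ α β : ℝ, 0 ≤ α → α < β → β ≤ 1 → Hmean β x y ≤ Hmean α x y) ∧
    (∀ α β : ℝ, 0 ≤ α → α < β → β ≤ 2 → Gmean β x y ≤ Gmean α x y) ∧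
    (∀ α β : ℝ, 0 ≤ α → α < β → β ≤ 1 → Amean α x y ≤ Amean β x y) := by
  refine ⟨fun α β hα hαβ _ => ?_, fun α β hα hαβ _ => ?_, fun α β hα hαβ _ => ?_⟩
  · rw [Hmean_eq_Gmean_two_mul hx hy, Hmean_eq_Gmean_two_mul hx hy]
    exact Gmean_antitoneOn hx hy (mul_nonneg zero_le_two hα)
      (mul_nonneg zero_le_two (hα.trans hαβ.le)) (by linarith)
  · exact Gmean_antitoneOn hx hy hα (hα.trans hαβ.le) hαβ.le
  · exact Amean_monotoneOn hx hy hα (hα.trans hαβ.le) hαβ.le
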